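/- Let V : ℝ² → ℝ satisfy V(-x₁,x₂) = V(x₁,x₂) for all (x₁,x₂) ∈ ℝ², let ω ∈ ℝ, and let k = (k₁,k₂) ∈ ℝ² with k₁ ∈ {0, 1/2}. Let u : ℝ² → ℂ be twice continuously differentiable, not identically zero, with -Δu(x) + V(x)u(x) = ω u(x) for all x ∈ ℝ² and u(x + 2πm) = e^{2πi m·k} u(x) for all x ∈ ℝ² and m ∈ ℤ². Assume the eigenvalue ω has geometric multiplicity one in the sense that every twice continuously differentiable w : ℝ² → ℂ satisfying the same equation -Δw + Vw = ωw and the same quasiperiodicity condition equals c·u for some c ∈ ℂ. Then either u(-x₁,x₂) = u(x₁,x₂) for all (x₁,x₂) ∈ ℝ², or u(-x₁,x₂) = -u(x₁,x₂) for all (x₁,x₂) ∈ ℝ². -/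

import Mathlib

/-!
Since `V` is even in `x₁`, the reflection `w(x₁, x₂) = u(-x₁, x₂)` solves the same equation, and it
is quasiperiodic with quasimomentum `(-k₁, k₂)`, which agrees with `(k₁, k₂)` modulo `ℤ²` because
`2k₁ ∈ ℤ`. Simplicity gives `w = c u`; reflecting twice yields `c² = 1`, so `c = ±1`.
-/

/-- The Laplacian of a (curried) function on `ℝ²`. -/
noncomputable def lap (u : ℝ → ℝ → ℂ) (x₁ x₂ : ℝ) : ℂ :=
  deriv (deriv (fun t => u t x₂)) x₁ + deriv (deriv (fun t => u x₁ t)) x₂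

open Complex

def IsEigenfunction (V : ℝ → ℝ → ℝ) (ω : ℝ) (u : ℝ → ℝ → ℂ) : Prop :=
  ∀ x₁ x₂ : ℝ, -(lap u x₁ x₂) + (V x₁ x₂ : ℂ) * u x₁ x₂ = (ω : ℂ) * u x₁ x₂

def IsQuasiperiodic (k₁ k₂ : ℝ) (u : ℝ → ℝ → ℂ) : Prop :=
  ∀ (x₁ x₂ : ℝ) (m₁ m₂ : ℤ),
    u (x₁ + 2 * Real.pi * m₁) (x₂ + 2 * Real.pi * m₂)
      = exp (2 * (Real.pi : ℂ) * I * ((m₁ : ℂ) * (k₁ : ℂ) + (m₂ : ℂ) * (k₂ : ℂ))) * u x₁ x₂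

lemma lap_comp_neg (u : ℝ → ℝ → ℂ) (x₁ x₂ : ℝ) :
    lap (fun a b => u (-a) b) x₁ x₂ = lap u (-x₁) x₂ := by
  have hderiv : deriv (fun t => u (-t) x₂) = fun t => -deriv (fun s => u s x₂) (-t) :=
    funext fun t => deriv_comp_neg (fun s => u s x₂) t
  rw [lap, lap, hderiv, deriv.fun_neg, deriv_comp_neg, neg_neg]

lemma IsEigenfunction.comp_neg {V : ℝ → ℝ → ℝ} {ω : ℝ} {u : ℝ → ℝ → ℂ}
    (hV : ∀ x₁ x₂, V (-x₁) x₂ = V x₁ x₂) (hu : IsEigenfunction V ω u) :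
    IsEigenfunction V ω (fun a b => u (-a) b) := by
  intro x₁ x₂
  simpa only [lap_comp_neg, hV] using hu (-x₁) x₂

lemma IsQuasiperiodic.comp_neg {k₁ k₂ : ℝ} {u : ℝ → ℝ → ℂ} (hk₁ : ∃ n : ℤ, (n : ℝ) = 2 * k₁)
    (hu : IsQuasiperiodic k₁ k₂ u) : IsQuasiperiodic k₁ k₂ (fun a b => u (-a) b) := by
  obtain ⟨n, hn⟩ := hk₁
  intro x₁ x₂ m₁ m₂
  have hphase : 2 * (Real.pi : ℂ) * I * (((-m₁ : ℤ) : ℂ) * k₁ + m₂ * k₂)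
      = 2 * Real.pi * I * (m₁ * k₁ + m₂ * k₂) + ((-m₁ * n : ℤ) : ℂ) * (2 * Real.pi * I) := by
    have hn' : (n : ℂ) = 2 * k₁ := by exact_mod_cast hn
    push_cast
    rw [hn']
    ring
  have hx : -(x₁ + 2 * Real.pi * m₁) = -x₁ + 2 * Real.pi * ((-m₁ : ℤ) : ℝ) := by
    push_cast
    ring
  simp only [hx, hu (-x₁) x₂ (-m₁) m₂, hphase, exp_add, exp_int_mul_two_pi_mul_I, mul_one]

lemma even_or_odd_of_comp_neg_eq_mul {α β K : Type*} [InvolutiveNeg α] [CommRing K]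
    [NoZeroDivisors K] {u : α → β → K} {c : K} (hc : ∀ a b, u (-a) b = c * u a b)
    (hne : ∃ a b, u a b ≠ 0) :
    (∀ a b, u (-a) b = u a b) ∨ ∀ a b, u (-a) b = -u a b := by
  obtain ⟨a, b, hab⟩ := hne
  have hcc : c * c = 1 := by
    have h : (c * c - 1) * u a b = 0 := by
      have := hc (-a) b
      rw [neg_neg, hc a b] at this
      linear_combination -this
    exact sub_eq_zero.mp ((mul_eq_zero.mp h).resolve_right hab)
  rcases mul_self_eq_one_iff.mp hcc with rfl | rfl
  · exact Or.inl fun a b => by rw [hc, one_mul]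
  · exact Or.inr fun a b => by rw [hc, neg_one_mul]

theorem stmt16 (V : ℝ → ℝ → ℝ) (hV : ∀ x₁ x₂ : ℝ, V (-x₁) x₂ = V x₁ x₂)
    (ω k₁ k₂ : ℝ) (hk₁ : k₁ = 0 ∨ k₁ = 1 / 2) (u : ℝ → ℝ → ℂ)
    (hu : ContDiff ℝ 2 (fun p : ℝ × ℝ => u p.1 p.2))
    (hne : ∃ x₁ x₂ : ℝ, u x₁ x₂ ≠ 0)
    (heq : ∀ x₁ x₂ : ℝ,
      -(lap u x₁ x₂) + (V x₁ x₂ : ℂ) * u x₁ x₂ = (ω : ℂ) * u x₁ x₂)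
    (hqp : ∀ (x₁ x₂ : ℝ) (m₁ m₂ : ℤ),
      u (x₁ + 2 * Real.pi * m₁) (x₂ + 2 * Real.pi * m₂)
        = Complex.exp (2 * (Real.pi : ℂ) * Complex.I * ((m₁ : ℂ) * (k₁ : ℂ) + (m₂ : ℂ) * (k₂ : ℂ)))
            * u x₁ x₂)
    (hsimple : ∀ w : ℝ → ℝ → ℂ,
      ContDiff ℝ 2 (fun p : ℝ × ℝ => w p.1 p.2) →
      (∀ x₁ x₂ : ℝ,
        -(lap w x₁ x₂) + (V x₁ x₂ : ℂ) * w x₁ x₂ = (ω : ℂ) * w x₁ x₂) →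
      (∀ (x₁ x₂ : ℝ) (m₁ m₂ : ℤ),
        w (x₁ + 2 * Real.pi * m₁) (x₂ + 2 * Real.pi * m₂)
          = Complex.exp (2 * (Real.pi : ℂ) * Complex.I
              * ((m₁ : ℂ) * (k₁ : ℂ) + (m₂ : ℂ) * (k₂ : ℂ))) * w x₁ x₂) →
      ∃ c : ℂ, ∀ x₁ x₂ : ℝ, w x₁ x₂ = c * u x₁ x₂) :
    (∀ x₁ x₂ : ℝ, u (-x₁) x₂ = u x₁ x₂) ∨ (∀ x₁ x₂ : ℝ, u (-x₁) x₂ = -u x₁ x₂) := by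
  have h2k₁ : ∃ n : ℤ, (n : ℝ) = 2 * k₁ := by
    rcases hk₁ with rfl | rfl
    · exact ⟨0, by norm_num⟩
    · exact ⟨1, by norm_num⟩
  have hu' : ContDiff ℝ 2 (fun p : ℝ × ℝ => u (-p.1) p.2) :=
    hu.comp (contDiff_fst.neg.prodMk contDiff_snd)
  obtain ⟨c, hc⟩ := hsimple _ hu' (IsEigenfunction.comp_neg hV heq)
    (IsQuasiperiodic.comp_neg h2k₁ hqp)
  exact even_or_odd_of_comp_neg_eq_mul hc hne
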